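/- For every (a,b) ∈ ℝ² with |b| < a, the quantity p := (1/3)(√(4a² − 3b²) − a) is strictly positive, the quantity u := b/√(4p(p+a)) is well defined, and Θ(p,u) = (a,b); together with the recovery of (p,u) from Θ(p,u), this shows that Θ : S → S̃ is a bijection with inverse Θ⁻¹(a,b) = ((1/3)(√(4a²−3b²) − a), b/√(4p(p+a))). -/
import Mathlib

open Real Set

noncomputable def theta (p u : ℝ) : ℝ × ℝ :=
  (p * (3 + 4 * u ^ 2), 4 * p * u * Real.sqrt (1 + u ^ 2))

lemma theta_key (a b : ℝ) (hab : |b| < a)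
    (p u : ℝ)
    (hp : p = (1 / 3) * (Real.sqrt (4 * a ^ 2 - 3 * b ^ 2) - a))
    (hu : u = b / Real.sqrt (4 * p * (p + a))) :
    0 < p ∧ 0 < 4 * p * (p + a) ∧ theta p u = (a, b) := by
  have ha : 0 < a := lt_of_le_of_lt (abs_nonneg b) hab
  have hb2 : b ^ 2 < a ^ 2 := by
    have := abs_lt.mp hab
    nlinarith [this.1, this.2]
  have hlt : a < Real.sqrt (4 * a ^ 2 - 3 * b ^ 2) :=
    (Real.lt_sqrt ha.le).mpr (by nlinarith)
  have hppos : 0 < p := by rw [hp]; linarith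
  have hsq : (3 * p + a) ^ 2 = 4 * a ^ 2 - 3 * b ^ 2 := by
    have h3 : 3 * p + a = Real.sqrt (4 * a ^ 2 - 3 * b ^ 2) := by rw [hp]; ring
    rw [h3, Real.sq_sqrt (by nlinarith)]
  have hb2' : b ^ 2 = a ^ 2 - 3 * p ^ 2 - 2 * a * p := by nlinarith
  have hpa : 0 < p + a := by linarith
  have h4p : 0 < 4 * p * (p + a) := by positivity
  set s := Real.sqrt (4 * p * (p + a)) with hs
  have hspos : 0 < s := Real.sqrt_pos.mpr h4p
  have hs2 : s ^ 2 = 4 * p * (p + a) := Real.sq_sqrt h4p.le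
  have hu2 : u ^ 2 = b ^ 2 / s ^ 2 := by rw [hu, div_pow]
  have hone : 1 + u ^ 2 = ((p + a) / s) ^ 2 := by
    rw [hu2, div_pow]
    field_simp
    nlinarith
  refine ⟨hppos, h4p, ?_⟩
  unfold theta
  have hsqrt1 : Real.sqrt (1 + u ^ 2) = (p + a) / s :=
    by rw [hone, Real.sqrt_sq (by positivity)]
  ext <;> simp only
  · have : p * (3 + 4 * u ^ 2) * s ^ 2 = a * s ^ 2 := by
      rw [hu2]
      field_simp
      nlinarith
    have hs2ne : s ^ 2 ≠ 0 := by positivity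
    exact mul_right_cancel₀ hs2ne this
  · rw [hsqrt1, hu]
    field_simp
    linear_combination (-b) * hs2

set_option maxHeartbeats 1600000 in
/-- For `(a,b)` with `|b| < a`, the quantities
`p = (1/3)(√(4a²−3b²) − a)` and `u = b/√(4p(p+a))` are well defined
(`p > 0` and `4p(p+a) > 0`) and satisfy `Θ(p,u) = (a,b)`; moreover `Θ` is a
bijection from `S = {(p,u) : p > 0}` onto `S̃ = {(a,b) : |b| < a}`. -/
theorem theta_inverse (a b : ℝ) (hab : |b| < a)
    (p u : ℝ)
    (hp : p = (1 / 3) * (Real.sqrt (4 * a ^ 2 - 3 * b ^ 2) - a))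
    (hu : u = b / Real.sqrt (4 * p * (p + a))) :
    (0 < p ∧ 0 < 4 * p * (p + a) ∧ theta p u = (a, b)) ∧
      Set.BijOn (fun x : ℝ × ℝ => theta x.1 x.2)
        {x : ℝ × ℝ | 0 < x.1} {y : ℝ × ℝ | |y.2| < y.1} := by
  refine ⟨theta_key a b hab p u hp hu, ?_, ?_, ?_⟩
  · -- MapsTo
    rintro ⟨q, v⟩ hq
    simp only [mem_setOf_eq] at hq ⊢
    unfold theta
    simp only
    have hqv : (Real.sqrt (1 + v ^ 2)) ^ 2 = 1 + v ^ 2 := Real.sq_sqrt (by positivity)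
    have hqvpos : 0 < Real.sqrt (1 + v ^ 2) := Real.sqrt_pos.mpr (by positivity)
    rw [abs_lt]
    constructor <;>
      nlinarith [sq_nonneg (|v| - Real.sqrt (1 + v ^ 2)), sq_abs v,
        mul_le_mul_of_nonneg_right (le_abs_self v) hqvpos.le,
        mul_le_mul_of_nonneg_right (neg_abs_le v) hqvpos.le,
        abs_nonneg v, mul_pos hq hqvpos, hq.le]
  · -- InjOn
    rintro ⟨p₁, u₁⟩ h1 ⟨p₂, u₂⟩ h2 heq
    simp only [mem_setOf_eq] at h1 h2
    simp only [theta, Prod.mk.injEq] at heq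
    obtain ⟨ha, hb⟩ := heq
    have hq1 : (Real.sqrt (1 + u₁ ^ 2)) ^ 2 = 1 + u₁ ^ 2 := Real.sq_sqrt (by positivity)
    have hq2 : (Real.sqrt (1 + u₂ ^ 2)) ^ 2 = 1 + u₂ ^ 2 := Real.sq_sqrt (by positivity)
    have key1 : 3 * p₁ ^ 2 + 2 * (p₁ * (3 + 4 * u₁ ^ 2)) * p₁
        = (p₁ * (3 + 4 * u₁ ^ 2)) ^ 2 - (4 * p₁ * u₁ * Real.sqrt (1 + u₁ ^ 2)) ^ 2 := by
      nlinarith [hq1]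
    have key2 : 3 * p₂ ^ 2 + 2 * (p₁ * (3 + 4 * u₁ ^ 2)) * p₂
        = (p₁ * (3 + 4 * u₁ ^ 2)) ^ 2 - (4 * p₂ * u₂ * Real.sqrt (1 + u₂ ^ 2)) ^ 2 := by
      rw [ha]; nlinarith [hq2]
    have hApos : 0 < p₁ * (3 + 4 * u₁ ^ 2) := by positivity
    have hbsq : (4 * p₁ * u₁ * Real.sqrt (1 + u₁ ^ 2)) ^ 2
        = (4 * p₂ * u₂ * Real.sqrt (1 + u₂ ^ 2)) ^ 2 := by rw [hb]
    have hfac : (p₁ - p₂) * (3 * p₁ + 3 * p₂ + 2 * (p₁ * (3 + 4 * u₁ ^ 2))) = 0 := by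
      linear_combination key1 - key2 - hbsq
    have hpp : p₁ = p₂ := by
      rcases mul_eq_zero.mp hfac with h | h
      · linarith
      · nlinarith
    subst hpp
    have huu2 : u₁ ^ 2 = u₂ ^ 2 := by
      have := mul_left_cancel₀ (ne_of_gt h1) ha
      linarith
    have hq12 : Real.sqrt (1 + u₁ ^ 2) = Real.sqrt (1 + u₂ ^ 2) := by rw [huu2]
    have hqpos : 0 < Real.sqrt (1 + u₂ ^ 2) := Real.sqrt_pos.mpr (by positivity)
    rw [hq12] at hb
    have h4 : 4 * p₁ * u₁ = 4 * p₁ * u₂ := mul_right_cancel₀ (ne_of_gt hqpos) hb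
    have huu : u₁ = u₂ := mul_left_cancel₀ (show (4:ℝ) * p₁ ≠ 0 by positivity) h4
    rw [huu]
  · -- SurjOn
    rintro ⟨a', b'⟩ hy
    simp only [mem_setOf_eq] at hy
    obtain ⟨hpp, -, hth⟩ := theta_key a' b' hy _ _ rfl rfl
    exact ⟨(_, _), hpp, hth⟩
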